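/- Let Ω ⊆ V be a transitive state space whose inner product ⟪·,·⟫ is GL(Ω)-invariant and whose positive cone V₊ is self-dual with respect to ⟪·,·⟫, and let ω_M be a GL(Ω)-invariant state with ‖ω_M‖ = 1 and ⟪ω_M, ω⟫ = 1 for all ω ∈ Ω. Let F and G be ideal measurements with finite outcome sets A and B, and let M̃ be an approximate joint measurement of (F, G) with marginals M̃^F and M̃^G. Then there exists a state ω ∈ Ω such that D_∞(M̃^F, F) + D_∞(M̃^G, G) ≥ LE(ω^F) + LE(ω^G). -/

import Mathlib

open RealInnerProductSpace

variable {V : Type*} [NormedAddCommGroup V] [InnerProductSpace ℝ V] [FiniteDimensional ℝ V]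

/-- A state space: nonempty compact convex set whose affine hull misses `0` and has
dimension `dim V - 1` (so it spans `V`). -/
def IsStateSpace (Ω : Set V) : Prop :=
  Ω.Nonempty ∧ IsCompact Ω ∧ Convex ℝ Ω ∧ (0 : V) ∉ affineSpan ℝ Ω ∧
    Module.finrank ℝ (vectorSpan ℝ Ω) + 1 = Module.finrank ℝ V

/-- The group `GL(Ω)` of linear bijections preserving `Ω`. -/
def autGroup (Ω : Set V) : Set (V ≃ₗ[ℝ] V) := {T | T '' Ω = Ω}

/-- Transitivity of the action of `GL(Ω)` on the extreme points of `Ω`. -/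
def IsTransitive (Ω : Set V) : Prop :=
  ∀ ω₁ ∈ Set.extremePoints ℝ Ω, ∀ ω₂ ∈ Set.extremePoints ℝ Ω,
    ∃ T ∈ autGroup Ω, T ω₁ = ω₂

/-- The inner product of `V` is invariant under `GL(Ω)`. -/
def InvariantInner (Ω : Set V) : Prop :=
  ∀ T ∈ autGroup Ω, ∀ x y : V, ⟪T x, T y⟫ = ⟪x, y⟫

/-- The positive cone generated by `Ω`. -/
def posCone (Ω : Set V) : Set V := {x | ∃ l : ℝ, ∃ ω ∈ Ω, 0 ≤ l ∧ x = l • ω}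

/-- Self-duality of the positive cone with respect to the inner product of `V`. -/
def SelfDualCone (Ω : Set V) : Prop :=
  posCone Ω = {y | ∀ x ∈ posCone Ω, 0 ≤ ⟪x, y⟫}

/-- An effect on `Ω`. -/
def IsEffect (Ω : Set V) (e : V) : Prop := ∀ ω ∈ Ω, 0 ≤ ⟪e, ω⟫ ∧ ⟪e, ω⟫ ≤ 1

/-- A measurement with outcome set `A`: a family of nonzero effects summing to the
unit effect `ωM`. -/
def IsMeasurement (Ω : Set V) (ωM : V) {A : Type*} [Fintype A] (f : A → V) : Prop :=
  (∀ a, f a ≠ 0 ∧ IsEffect Ω (f a)) ∧ ∑ a, f a = ωM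

/-- An ideal measurement. -/
def IsIdeal (Ω : Set V) (ωM : V) {A : Type*} [Fintype A] (f : A → V) : Prop :=
  IsMeasurement Ω ωM f ∧
    ∃ c : ℝ, 0 < c ∧ (∀ ω ∈ Set.extremePoints ℝ Ω, ‖ω‖ = c) ∧
      ∀ a, ∃ S : Finset V, ↑S ⊆ Set.extremePoints ℝ Ω ∧
        (f a = (c ^ 2)⁻¹ • ∑ ω' ∈ S, ω' ∨ f a = ωM - (c ^ 2)⁻¹ • ∑ ω' ∈ S, ω')

/-- First marginal of a joint measurement. -/
def margF {A B : Type*} [Fintype B] (m : A × B → V) : A → V := fun a => ∑ b, m (a, b)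

/-- Second marginal of a joint measurement. -/
def margG {A B : Type*} [Fintype A] (m : A × B → V) : B → V := fun b => ∑ a, m (a, b)

open Classical in
/-- `∑_{a' : d(a',a) ≤ w/2} ⟪f a', ω⟫`. -/
noncomputable def ballSum {A : Type*} [Fintype A] [MetricSpace A]
    (f : A → V) (ω : V) (a : A) (w : ℝ) : ℝ :=
  ∑ a' ∈ Finset.univ.filter (fun x => dist x a ≤ w / 2), ⟪f a', ω⟫

/-- Overall width of the distribution of `f` on `ω` at confidence level `1 - ε`. -/
noncomputable def overallWidth {A : Type*} [Fintype A] [MetricSpace A]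
    (f : A → V) (ω : V) (ε : ℝ) : ℝ :=
  sInf {w : ℝ | 0 < w ∧ ∃ a : A, 1 - ε ≤ ballSum f ω a w}

/-- Error bar width of `ft` relative to `f`. -/
noncomputable def errorBarWidth (Ω : Set V) {A : Type*} [Fintype A] [MetricSpace A]
    (ft f : A → V) (ε : ℝ) : ℝ :=
  sInf {w : ℝ | 0 < w ∧ ∀ a : A, ∀ ω ∈ Ω, ⟪f a, ω⟫ = 1 → 1 - ε ≤ ballSum ft ω a w}

/-- Werner's measure `D_W(ft, f)`. -/
noncomputable def wernerD (Ω : Set V) {A : Type*} [Fintype A] [MetricSpace A]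
    (ft f : A → V) : ℝ :=
  sSup {d : ℝ | ∃ ω ∈ Ω, ∃ h : A → ℝ, (∀ a₁ a₂ : A, |h a₁ - h a₂| ≤ dist a₁ a₂) ∧
    d = |∑ a, h a * (⟪ft a, ω⟫ - ⟪f a, ω⟫)|}

/-- `l∞` distance `D_∞(ft, f)`. -/
noncomputable def dInfty (Ω : Set V) {A : Type*} (ft f : A → V) : ℝ :=
  sSup {d : ℝ | ∃ ω ∈ Ω, ∃ a : A, d = |⟪ft a, ω⟫ - ⟪f a, ω⟫|}

/-- Minimum localization error `LE(ω^F)`. -/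
noncomputable def locError {A : Type*} [Fintype A] [Nonempty A] (f : A → V) (ω : V) : ℝ :=
  1 - Finset.univ.sup' Finset.univ_nonempty (fun a => ⟪f a, ω⟫)


/-!
Self-duality writes every effect `e` as `⟪ωM, e⟫ • σ` with `σ ∈ Ω`, and for the effects of an
ideal measurement it also gives `⟪e, e⟫ = ⟪ωM, e⟫`. Hence `⟪e, e⟫ - ⟪e, ẽ⟫ ≤ ⟪ωM, e⟫ · D∞`
for an approximation `ẽ` of `e`, and summing over outcomes gives
`∑ₐ ⟪f a, M^F a⟫ ≥ 1 - D∞(M^F, F)`, likewise for `G`. Thus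
`∑_{a,b} ⟪f a + g b, m (a, b)⟫ ≥ 2 - D∞(M^F, F) - D∞(M^G, G)`, while `∑_{a,b} ⟪ωM, m (a, b)⟫ = 1`,
so some outcome `(a, b)` has `⟪f a + g b, σ⟫ ≥ 2 - D∞(M^F, F) - D∞(M^G, G)` for the state `σ`
in the direction of `m (a, b)`.
-/

section Effects

variable {V : Type*} [NormedAddCommGroup V] [InnerProductSpace ℝ V] {Ω : Set V} {ωM : V}

theorem SelfDualCone.inner_nonneg (hsd : SelfDualCone Ω) {x y : V} (hx : x ∈ Ω) (hy : y ∈ Ω) :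
    0 ≤ ⟪x, y⟫ := by
  have hy' : y ∈ posCone Ω := ⟨1, y, hy, zero_le_one, (one_smul ℝ y).symm⟩
  rw [hsd] at hy'
  exact hy' x ⟨1, x, hx, zero_le_one, (one_smul ℝ x).symm⟩

theorem SelfDualCone.exists_mem_eq_smul (hsd : SelfDualCone Ω)
    (hωMunit : ∀ ω ∈ Ω, ⟪ωM, ω⟫ = 1) {e : V} (he : ∀ ω ∈ Ω, 0 ≤ ⟪e, ω⟫) :
    ∃ σ ∈ Ω, 0 ≤ ⟪ωM, e⟫ ∧ e = ⟪ωM, e⟫ • σ := by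
  have hmem : e ∈ posCone Ω := by
    rw [hsd]
    rintro x ⟨l, ω, hω, hl, rfl⟩
    rw [real_inner_smul_left, real_inner_comm]
    exact mul_nonneg hl (he ω hω)
  obtain ⟨l, σ, hσ, hl, rfl⟩ := hmem
  rw [real_inner_smul_right, hωMunit σ hσ, mul_one]
  exact ⟨σ, hσ, hl, rfl⟩

theorem IsEffect.unit_sub (hωMunit : ∀ ω ∈ Ω, ⟪ωM, ω⟫ = 1) {e : V} (he : IsEffect Ω e) :
    IsEffect Ω (ωM - e) := by
  intro ω hω
  rw [inner_sub_left, hωMunit ω hω]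
  constructor <;> linarith [he ω hω]

theorem inner_smul_sum_extremePoints_eq_one (hsd : SelfDualCone Ω) {c : ℝ} (hc : 0 < c)
    (hnorm : ∀ ω ∈ Set.extremePoints ℝ Ω, ‖ω‖ = c) {S : Finset V}
    (hS : ↑S ⊆ Set.extremePoints ℝ Ω) (he : IsEffect Ω ((c ^ 2)⁻¹ • ∑ ω ∈ S, ω))
    {ωj : V} (hj : ωj ∈ S) : ⟪(c ^ 2)⁻¹ • ∑ ω ∈ S, ω, ωj⟫ = 1 := by
  have hmem : ∀ ω ∈ S, ω ∈ Ω := fun ω h => (hS h).1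
  have hdiag : ⟪ωj, ωj⟫ = c ^ 2 := by
    rw [real_inner_self_eq_norm_sq, hnorm ωj (hS hj)]
  have hlower : c ^ 2 ≤ ∑ ω ∈ S, ⟪ω, ωj⟫ :=
    hdiag ▸ Finset.single_le_sum (fun ω hω => hsd.inner_nonneg (hmem ω hω) (hmem ωj hj)) hj
  have hupper := (he ωj (hmem ωj hj)).2
  rw [real_inner_smul_left, sum_inner] at hupper ⊢
  have hc2 : 0 < c ^ 2 := by positivity
  refine le_antisymm hupper ?_
  rw [le_inv_mul_iff₀ hc2, mul_one]
  exact hlower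

theorem inner_self_smul_sum_extremePoints (hsd : SelfDualCone Ω)
    (hωMunit : ∀ ω ∈ Ω, ⟪ωM, ω⟫ = 1) {c : ℝ} (hc : 0 < c)
    (hnorm : ∀ ω ∈ Set.extremePoints ℝ Ω, ‖ω‖ = c) {S : Finset V}
    (hS : ↑S ⊆ Set.extremePoints ℝ Ω) (he : IsEffect Ω ((c ^ 2)⁻¹ • ∑ ω ∈ S, ω)) :
    ⟪(c ^ 2)⁻¹ • ∑ ω ∈ S, ω, (c ^ 2)⁻¹ • ∑ ω ∈ S, ω⟫ = ⟪ωM, (c ^ 2)⁻¹ • ∑ ω ∈ S, ω⟫ := by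
  rw [real_inner_smul_right, real_inner_smul_right, inner_sum, inner_sum]
  congr 1
  refine Finset.sum_congr rfl fun ωj hj => ?_
  rw [inner_smul_sum_extremePoints_eq_one hsd hc hnorm hS he hj, hωMunit ωj (hS hj).1]

theorem inner_self_unit_sub (hωMωM : ⟪ωM, ωM⟫ = 1) {e : V} (he : ⟪e, e⟫ = ⟪ωM, e⟫) :
    ⟪ωM - e, ωM - e⟫ = ⟪ωM, ωM - e⟫ := by
  simp only [inner_sub_left, inner_sub_right, he, hωMωM, real_inner_comm e ωM]
  ring

theorem IsIdeal.inner_self_eq (hsd : SelfDualCone Ω) (hωMunit : ∀ ω ∈ Ω, ⟪ωM, ω⟫ = 1)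
    (hωMωM : ⟪ωM, ωM⟫ = 1) {A : Type*} [Fintype A] {f : A → V} (hf : IsIdeal Ω ωM f)
    (a : A) : ⟪f a, f a⟫ = ⟪ωM, f a⟫ := by
  obtain ⟨hmeas, c, hc, hnorm, hS⟩ := hf
  have he := (hmeas.1 a).2
  obtain ⟨S, hSext, hfa | hfa⟩ := hS a
  · rw [hfa] at he ⊢
    exact inner_self_smul_sum_extremePoints hsd hωMunit hc hnorm hSext he
  · rw [hfa] at he ⊢
    have he' : IsEffect Ω ((c ^ 2)⁻¹ • ∑ ω ∈ S, ω) := by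
      simpa only [sub_sub_cancel] using he.unit_sub hωMunit
    exact inner_self_unit_sub hωMωM (inner_self_smul_sum_extremePoints hsd hωMunit hc hnorm
      hSext he')

theorem inner_self_sub_inner_le (hsd : SelfDualCone Ω) (hωMunit : ∀ ω ∈ Ω, ⟪ωM, ω⟫ = 1)
    {e e' : V} {D : ℝ} (he : ∀ ω ∈ Ω, 0 ≤ ⟪e, ω⟫) (hD : ∀ ω ∈ Ω, ⟪e, ω⟫ - ⟪e', ω⟫ ≤ D) :
    ⟪e, e⟫ - ⟪e, e'⟫ ≤ ⟪ωM, e⟫ * D := by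
  obtain ⟨σ, hσ, hl, hσe⟩ := hsd.exists_mem_eq_smul hωMunit he
  have hσD := hD σ hσ
  calc ⟪e, e⟫ - ⟪e, e'⟫ = ⟪e, e - e'⟫ := (inner_sub_right e e e').symm
    _ = ⟪ωM, e⟫ * ⟪e - e', σ⟫ := by
        nth_rw 1 [hσe]
        rw [real_inner_smul_left, real_inner_comm σ]
    _ = ⟪ωM, e⟫ * (⟪e, σ⟫ - ⟪e', σ⟫) := by rw [inner_sub_left]
    _ ≤ ⟪ωM, e⟫ * D := mul_le_mul_of_nonneg_left hσD hl

end Effects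

section Measurements

variable {V : Type*} [NormedAddCommGroup V] [InnerProductSpace ℝ V] {Ω : Set V} {ωM : V}

theorem IsMeasurement.isEffect_sum (hωMunit : ∀ ω ∈ Ω, ⟪ωM, ω⟫ = 1) {ι : Type*} [Fintype ι]
    {m : ι → V} (hm : IsMeasurement Ω ωM m) (s : Finset ι) : IsEffect Ω (∑ i ∈ s, m i) := by
  intro ω hω
  have hnonneg : ∀ i, 0 ≤ ⟪m i, ω⟫ := fun i => ((hm.1 i).2 ω hω).1
  rw [sum_inner]
  refine ⟨Finset.sum_nonneg fun i _ => hnonneg i, ?_⟩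
  calc ∑ i ∈ s, ⟪m i, ω⟫ ≤ ∑ i, ⟪m i, ω⟫ :=
        Finset.sum_le_sum_of_subset_of_nonneg (Finset.subset_univ s) fun i _ _ => hnonneg i
    _ = 1 := by rw [← sum_inner, hm.2, hωMunit ω hω]

theorem IsMeasurement.isEffect_margF (hωMunit : ∀ ω ∈ Ω, ⟪ωM, ω⟫ = 1)
    {A B : Type*} [Fintype A] [Fintype B] {m : A × B → V} (hm : IsMeasurement Ω ωM m) (a : A) :
    IsEffect Ω (margF m a) := by
  have h := hm.isEffect_sum hωMunit (Finset.univ.map (Function.Embedding.sectR a B))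
  rwa [Finset.sum_map] at h

theorem IsMeasurement.isEffect_margG (hωMunit : ∀ ω ∈ Ω, ⟪ωM, ω⟫ = 1)
    {A B : Type*} [Fintype A] [Fintype B] {m : A × B → V} (hm : IsMeasurement Ω ωM m) (b : B) :
    IsEffect Ω (margG m b) := by
  have h := hm.isEffect_sum hωMunit (Finset.univ.map (Function.Embedding.sectL A b))
  rwa [Finset.sum_map] at h

theorem sub_le_dInfty {A : Type*} {ft f : A → V} (hft : ∀ a, IsEffect Ω (ft a))
    (hf : ∀ a, IsEffect Ω (f a)) {ω : V} (hω : ω ∈ Ω) (a : A) :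
    ⟪f a, ω⟫ - ⟪ft a, ω⟫ ≤ dInfty Ω ft f := by
  have hbdd : BddAbove {d : ℝ | ∃ ω ∈ Ω, ∃ a : A, d = |⟪ft a, ω⟫ - ⟪f a, ω⟫|} := by
    refine ⟨1, ?_⟩
    rintro d ⟨ω', hω', a', rfl⟩
    have := hft a' ω' hω'
    have := hf a' ω' hω'
    rw [abs_sub_le_iff]
    constructor <;> linarith
  calc ⟪f a, ω⟫ - ⟪ft a, ω⟫ ≤ |⟪ft a, ω⟫ - ⟪f a, ω⟫| := by
        rw [abs_sub_comm]; exact le_abs_self _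
    _ ≤ dInfty Ω ft f := le_csSup hbdd ⟨ω, hω, a, rfl⟩

theorem one_sub_dInfty_le_sum_inner (hsd : SelfDualCone Ω) (hωMunit : ∀ ω ∈ Ω, ⟪ωM, ω⟫ = 1)
    (hωMωM : ⟪ωM, ωM⟫ = 1) {A : Type*} [Fintype A] {f ft : A → V} (hf : IsIdeal Ω ωM f)
    (hft : ∀ a, IsEffect Ω (ft a)) : 1 - dInfty Ω ft f ≤ ∑ a, ⟪f a, ft a⟫ := by
  have hfe : ∀ a, IsEffect Ω (f a) := fun a => (hf.1.1 a).2
  have hstep : ∀ a, ⟪ωM, f a⟫ - ⟪ωM, f a⟫ * dInfty Ω ft f ≤ ⟪f a, ft a⟫ := fun a => by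
    have := inner_self_sub_inner_le hsd hωMunit (e' := ft a) (fun ω hω => (hfe a ω hω).1)
      (fun ω hω => sub_le_dInfty hft hfe hω a)
    rw [hf.inner_self_eq hsd hωMunit hωMωM a] at this
    linarith
  calc 1 - dInfty Ω ft f = ∑ a, (⟪ωM, f a⟫ - ⟪ωM, f a⟫ * dInfty Ω ft f) := by
        rw [Finset.sum_sub_distrib, ← Finset.sum_mul, ← inner_sum, hf.1.2, hωMωM, one_mul]
    _ ≤ ∑ a, ⟪f a, ft a⟫ := Finset.sum_le_sum fun a _ => hstep a

theorem IsMeasurement.exists_mem_le_inner (hsd : SelfDualCone Ω)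
    (hωMunit : ∀ ω ∈ Ω, ⟪ωM, ω⟫ = 1) (hωMωM : ⟪ωM, ωM⟫ = 1) {ι : Type*} [Fintype ι]
    [Nonempty ι] {m : ι → V} (hm : IsMeasurement Ω ωM m) (h : ι → V) {K : ℝ}
    (hK : K ≤ ∑ i, ⟪h i, m i⟫) : ∃ i, ∃ σ ∈ Ω, K ≤ ⟪h i, σ⟫ := by
  have hsum : ∑ i, K * ⟪ωM, m i⟫ ≤ ∑ i, ⟪h i, m i⟫ := by
    rwa [← Finset.mul_sum, ← inner_sum, hm.2, hωMωM, mul_one]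
  obtain ⟨i, -, hi⟩ := Finset.exists_le_of_sum_le Finset.univ_nonempty hsum
  obtain ⟨σ, hσ, hl, hmi⟩ :=
    hsd.exists_mem_eq_smul hωMunit fun ω hω => ((hm.1 i).2 ω hω).1
  have hlpos : 0 < ⟪ωM, m i⟫ := hl.lt_of_ne fun h0 => (hm.1 i).1 (by rw [hmi, ← h0, zero_smul])
  have hhi : ⟪h i, m i⟫ = ⟪h i, σ⟫ * ⟪ωM, m i⟫ := by
    conv_lhs => rw [hmi]
    rw [real_inner_smul_right, mul_comm]
  exact ⟨i, σ, hσ, le_of_mul_le_mul_right (hhi ▸ hi) hlpos⟩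

theorem sum_inner_margF_add_sum_inner_margG {A B : Type*} [Fintype A] [Fintype B]
    (f : A → V) (g : B → V) (m : A × B → V) :
    ∑ a, ⟪f a, margF m a⟫ + ∑ b, ⟪g b, margG m b⟫ = ∑ p : A × B, ⟪f p.1 + g p.2, m p⟫ := by
  simp only [margF, margG, inner_sum, inner_add_left, Finset.sum_add_distrib,
    Fintype.sum_prod_type]
  rw [Finset.sum_comm (f := fun b a => ⟪g b, m (a, b)⟫)]

theorem locError_le {A : Type*} [Fintype A] [Nonempty A] (f : A → V) (ω : V) (a : A) :
    locError f ω ≤ 1 - ⟪f a, ω⟫ :=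
  sub_le_sub_left (Finset.le_sup' (fun a => ⟪f a, ω⟫) (Finset.mem_univ a)) 1

end Measurements

theorem preparation_implies_measurement_lInfty_general
    {V : Type*} [NormedAddCommGroup V] [InnerProductSpace ℝ V]
    {Ω : Set V} (hsd : SelfDualCone Ω)
    {ωM : V} (hωMΩ : ωM ∈ Ω) (hωMunit : ∀ ω ∈ Ω, ⟪ωM, ω⟫ = 1)
    {A B : Type*} [Fintype A] [Nonempty A] [Fintype B] [Nonempty B]
    {f : A → V} {g : B → V} (hF : IsIdeal Ω ωM f) (hG : IsIdeal Ω ωM g)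
    {m : A × B → V} (hM : IsMeasurement Ω ωM m) :
    ∃ ω ∈ Ω,
      locError f ω + locError g ω ≤
        dInfty Ω (margF m) f + dInfty Ω (margG m) g := by
  have hωMωM : ⟪ωM, ωM⟫ = 1 := hωMunit ωM hωMΩ
  have hFm := one_sub_dInfty_le_sum_inner hsd hωMunit hωMωM hF (hM.isEffect_margF hωMunit)
  have hGm := one_sub_dInfty_le_sum_inner hsd hωMunit hωMωM hG (hM.isEffect_margG hωMunit)
  obtain ⟨⟨a, b⟩, σ, hσ, hab⟩ := hM.exists_mem_le_inner hsd hωMunit hωMωM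
    (fun p => f p.1 + g p.2) (K := 2 - dInfty Ω (margF m) f - dInfty Ω (margG m) g)
    (by rw [← sum_inner_margF_add_sum_inner_margG]; linarith)
  refine ⟨σ, hσ, ?_⟩
  rw [inner_add_left] at hab
  linarith [locError_le f σ a, locError_le g σ b]

/-- **Theorem 2 (paper).** In a transitive, self-dual GPT, the sum of the `l∞` distances
of the marginals of an approximate joint measurement from the ideal measurements is
bounded below by the sum of the minimum localization errors on some state. -/
theorem preparation_implies_measurement_lInfty
    {V : Type*} [NormedAddCommGroup V] [InnerProductSpace ℝ V] [FiniteDimensional ℝ V]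
    {Ω : Set V} (hΩ : IsStateSpace Ω) (htrans : IsTransitive Ω)
    (hinv : InvariantInner Ω) (hsd : SelfDualCone Ω)
    {ωM : V} (hωMΩ : ωM ∈ Ω) (hωMfix : ∀ T ∈ autGroup Ω, T ωM = ωM)
    (hωMnorm : ‖ωM‖ = 1) (hωMunit : ∀ ω ∈ Ω, ⟪ωM, ω⟫ = 1)
    {A B : Type*} [Fintype A] [Nonempty A] [Fintype B] [Nonempty B]
    {f : A → V} {g : B → V} (hF : IsIdeal Ω ωM f) (hG : IsIdeal Ω ωM g)
    {m : A × B → V} (hM : IsMeasurement Ω ωM m) :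
    ∃ ω ∈ Ω,
      locError f ω + locError g ω ≤
        dInfty Ω (margF m) f + dInfty Ω (margG m) g :=
  preparation_implies_measurement_lInfty_general hsd hωMΩ hωMunit hF hG hM
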